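/- Let I ⊆ S = K[x_1,…,x_t] be an 𝔪-primary monomial ideal with v(I) = α(I) − 1. Then v(I^{n+1}) = v(I) + n·α(I) for all n ≥ 1. -/

import Mathlib

open MvPolynomial

noncomputable section

/-- The `v`-number of a graded ideal `I ⊆ K[x_1,…,x_t]`: the least `k ≥ 0` such that there is a
homogeneous polynomial `f` of degree `k` with `(I : f)` an associated prime of `S/I`. -/
def vNumber {σ K : Type*} [Field K] (I : Ideal (MvPolynomial σ K)) : ℕ :=
  sInf {k : ℕ | ∃ f : MvPolynomial σ K, f.IsHomogeneous k ∧
    Submodule.colon I (Ideal.span {f}) ∈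
      associatedPrimes (MvPolynomial σ K) (MvPolynomial σ K ⧸ I)}

/-- The edge ideal of a simple graph: generated by `x_i * x_j` for edges `{x_i, x_j}`. -/
def edgeIdeal (K : Type*) [Field K] {V : Type*} (G : SimpleGraph V) :
    Ideal (MvPolynomial V K) :=
  Ideal.span {m | ∃ i j, G.Adj i j ∧ m = X i * X j}

/-- `I` is a monomial ideal: generated by a set of monomials. -/
def IsMonomialIdeal {σ K : Type*} [Field K] (I : Ideal (MvPolynomial σ K)) : Prop :=
  ∃ A : Set (σ →₀ ℕ), I = Ideal.span ((fun a => (monomial a (1 : K))) '' A)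

/-- The graded maximal ideal `𝔪 = ⟨x_1,…,x_t⟩`. -/
def maxIdeal (K : Type*) [Field K] (σ : Type*) : Ideal (MvPolynomial σ K) :=
  Ideal.span (Set.range (X : σ → MvPolynomial σ K))

/-- `α(I)`: the minimum degree of a nonzero element of `I`. -/
def alphaNumber {σ K : Type*} [Field K] (I : Ideal (MvPolynomial σ K)) : ℕ :=
  sInf {d : ℕ | ∃ f ∈ I, f ≠ 0 ∧ f.totalDegree = d}

/-- Exponent vectors of the minimal monomial generators of a monomial ideal `I`:
monomials in `I` none of whose proper divisors lies in `I`. -/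
def minimalGenerators {σ K : Type*} [Field K] (I : Ideal (MvPolynomial σ K)) :
    Set (σ →₀ ℕ) :=
  {a | (monomial a (1 : K)) ∈ I ∧
    ∀ b : σ →₀ ℕ, b ≤ a → b ≠ a → (monomial b (1 : K)) ∉ I}

/-!
Since `I` is `𝔪`-primary, so is every power `J = I ^ (n + 1)`, and `𝔪` is the only associated prime
of `S ⧸ J`; thus `v(J)` is the least degree of a homogeneous `f` with `(J : f) = 𝔪`. A monomial
ideal lies in `𝔪 ^ α(I)`, so every nonzero element of `J` has degree at least `(n + 1) α(I)`.
Applied to `x_i f ∈ J` this gives `deg f ≥ (n + 1) α(I) - 1 = v(I) + n α(I)`. Conversely, if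
`(I : f) = 𝔪` with `deg f = v(I) = α(I) - 1` and `g ∈ I` is a monomial of degree `α(I)`, then
`f g ^ n` has degree `(n + 1) α(I) - 1`, so it is not in `J`, while `𝔪 f g ^ n ⊆ I · I ^ n = J`.
-/

namespace Ideal

section CommSemiring

variable {R : Type*} [CommSemiring R] {J : Ideal R}

theorem colon_span_singleton_eq_radical_iff (hJ : J.radical.IsMaximal) (f : R) :
    J.colon (span {f}) = J.radical ↔ f ∉ J ∧ J.radical ≤ J.colon (span {f}) := by
  refine ⟨fun h => ⟨fun hf => hJ.ne_top ?_, h.ge⟩,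
    fun ⟨hf, hle⟩ => (hJ.eq_of_le ?_ hle).symm⟩
  · rw [← h, eq_top_iff_one, mem_colon_span_singleton, one_mul]
    exact hf
  · rw [Ne, eq_top_iff_one, mem_colon_span_singleton, one_mul]
    exact hf

theorem colon_span_singleton_le_colon_pow_succ {g : R} (hg : g ∈ J) (f : R) (n : ℕ) :
    J.colon (span {f}) ≤ (J ^ (n + 1)).colon (span {f * g ^ n}) := by
  intro r hr
  rw [mem_colon_span_singleton] at hr ⊢
  rw [← mul_assoc, pow_succ']
  exact mul_mem_mul hr (pow_mem_pow hg n)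

end CommSemiring

section Noetherian

variable {R : Type*} [CommRing R] [IsNoetherianRing R] {J : Ideal R}

theorem colon_span_singleton_mem_associatedPrimes_iff (hJ : J.radical.IsMaximal) (f : R) :
    J.colon (span {f}) ∈ associatedPrimes R (R ⧸ J) ↔ J.colon (span {f}) = J.radical := by
  rw [associatedPrimes.eq_singleton_of_isPrimary (isPrimary_of_isMaximal_radical hJ)]
  rfl

theorem exists_colon_span_singleton_eq_radical (hJ : J.radical.IsMaximal) :
    ∃ f : R, J.colon (span {f}) = J.radical := by
  have hmem : J.radical ∈ associatedPrimes R (R ⧸ J) :=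
    associatedPrimes.eq_singleton_of_isPrimary (isPrimary_of_isMaximal_radical hJ) ▸ rfl
  obtain ⟨-, x, hx⟩ := isAssociatedPrime_iff.mp hmem
  obtain ⟨f, rfl⟩ := Quotient.mk_surjective x
  refine ⟨f, hx ▸ ?_⟩
  ext r
  rw [mem_colon_span_singleton, Submodule.mem_colon_singleton, Submodule.mem_bot,
    Algebra.smul_def, Quotient.algebraMap_eq, ← map_mul, Quotient.eq_zero_iff_mem]

end Noetherian

end Ideal

namespace MvPolynomial

variable {σ K : Type*} [Field K]

theorem maxIdeal_eq_idealOfVars : maxIdeal K σ = idealOfVars σ K := rfl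

theorem maxIdeal_eq_ker_constantCoeff :
    maxIdeal K σ = RingHom.ker (constantCoeff : MvPolynomial σ K →+* K) := by
  ext p
  rw [maxIdeal_eq_idealOfVars, ← pow_one (idealOfVars σ K), mem_pow_idealOfVars_iff',
    RingHom.mem_ker, constantCoeff_eq]
  simp [Finsupp.degree_eq_zero_iff]

theorem maxIdeal_isMaximal : (maxIdeal K σ).IsMaximal := by
  rw [maxIdeal_eq_ker_constantCoeff]
  exact RingHom.ker_isMaximal_of_surjective _ fun k => ⟨C k, constantCoeff_C _ _⟩

theorem le_totalDegree_of_mem_maxIdeal_pow {d : ℕ} {p : MvPolynomial σ K}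
    (hp : p ∈ maxIdeal K σ ^ d) (hp0 : p ≠ 0) : d ≤ p.totalDegree := by
  obtain ⟨s, hs⟩ := support_nonempty.mpr hp0
  rw [maxIdeal_eq_idealOfVars, mem_pow_idealOfVars_iff] at hp
  exact (hp s hs).trans (le_totalDegree hs)

theorem alphaNumber_le {J : Ideal (MvPolynomial σ K)} {p : MvPolynomial σ K} (hp : p ∈ J)
    (hp0 : p ≠ 0) : alphaNumber J ≤ p.totalDegree :=
  Nat.sInf_le ⟨p, hp, hp0, rfl⟩

@[simp]
theorem alphaNumber_bot : alphaNumber (⊥ : Ideal (MvPolynomial σ K)) = 0 := by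
  simp [alphaNumber]

theorem colon_eq_maxIdeal_iff {J : Ideal (MvPolynomial σ K)} (hprim : J.radical = maxIdeal K σ)
    (f : MvPolynomial σ K) : J.colon (Ideal.span {f}) = maxIdeal K σ ↔
      f ∉ J ∧ maxIdeal K σ ≤ J.colon (Ideal.span {f}) := by
  rw [← hprim]
  exact Ideal.colon_span_singleton_eq_radical_iff (hprim ▸ maxIdeal_isMaximal) f

theorem ne_zero_of_colon_eq_maxIdeal {J : Ideal (MvPolynomial σ K)}
    (hprim : J.radical = maxIdeal K σ) {f : MvPolynomial σ K}
    (hf : J.colon (Ideal.span {f}) = maxIdeal K σ) : f ≠ 0 := by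
  rintro rfl
  exact ((colon_eq_maxIdeal_iff hprim 0).mp hf).1 J.zero_mem

end MvPolynomial

namespace IsMonomialIdeal

variable {σ K : Type*} [Field K] {J : Ideal (MvPolynomial σ K)}

theorem mem_iff_forall_monomial_mem (hJ : IsMonomialIdeal J) {p : MvPolynomial σ K} :
    p ∈ J ↔ ∀ s ∈ p.support, monomial s (1 : K) ∈ J := by
  refine ⟨fun hp s hs => ?_, fun h => ?_⟩
  · obtain ⟨A, rfl⟩ := hJ
    obtain ⟨a, ha, has⟩ := mem_ideal_span_monomial_image.mp hp s hs
    exact mem_ideal_span_monomial_image.mpr fun t ht =>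
      Finset.mem_singleton.mp (support_monomial_subset ht) ▸ ⟨a, ha, has⟩
  · rw [p.as_sum]
    refine J.sum_mem fun s hs => ?_
    rw [← mul_one (coeff s p), ← C_mul_monomial]
    exact J.mul_mem_left _ (h s hs)

theorem le_maxIdeal_pow_alphaNumber (hJ : IsMonomialIdeal J) :
    J ≤ maxIdeal K σ ^ alphaNumber J := by
  intro p hp
  rw [maxIdeal_eq_idealOfVars, mem_pow_idealOfVars_iff]
  intro s hs
  have := alphaNumber_le (hJ.mem_iff_forall_monomial_mem.mp hp s hs)
    (monomial_eq_zero.not.mpr one_ne_zero)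
  rwa [totalDegree_monomial _ one_ne_zero] at this

theorem mul_alphaNumber_le_totalDegree (hJ : IsMonomialIdeal J) {m : ℕ} {p : MvPolynomial σ K}
    (hp : p ∈ J ^ m) (hp0 : p ≠ 0) : m * alphaNumber J ≤ p.totalDegree := by
  refine le_totalDegree_of_mem_maxIdeal_pow ?_ hp0
  rw [mul_comm, pow_mul]
  exact Ideal.pow_right_mono hJ.le_maxIdeal_pow_alphaNumber m hp

theorem exists_monomial_mem_degree_eq_alphaNumber (hJ : IsMonomialIdeal J) (hJ0 : J ≠ ⊥) :
    ∃ a, monomial a (1 : K) ∈ J ∧ a.degree = alphaNumber J := by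
  obtain ⟨p, hpJ, hp0⟩ := (Submodule.ne_bot_iff J).mp hJ0
  obtain ⟨q, hqJ, hq0, hqdeg⟩ : ∃ q ∈ J, q ≠ 0 ∧ q.totalDegree = alphaNumber J :=
    Nat.sInf_mem (s := {d | ∃ q ∈ J, q ≠ 0 ∧ q.totalDegree = d}) ⟨_, p, hpJ, hp0, rfl⟩
  obtain ⟨a, ha⟩ := support_nonempty.mpr hq0
  have haJ := hJ.mem_iff_forall_monomial_mem.mp hqJ a ha
  refine ⟨a, haJ, le_antisymm (hqdeg ▸ le_totalDegree ha) ?_⟩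
  have := alphaNumber_le haJ (monomial_eq_zero.not.mpr one_ne_zero)
  rwa [totalDegree_monomial _ one_ne_zero] at this

theorem exists_monomial_colon_le (hJ : IsMonomialIdeal J) {f : MvPolynomial σ K} (hfJ : f ∉ J)
    (hf : maxIdeal K σ ≤ J.colon (Ideal.span {f})) :
    ∃ s : σ →₀ ℕ, monomial s (1 : K) ∉ J ∧
      maxIdeal K σ ≤ J.colon (Ideal.span {monomial s (1 : K)}) := by
  obtain ⟨s, hs, hsJ⟩ : ∃ s ∈ f.support, monomial s (1 : K) ∉ J := by
    simpa using hJ.mem_iff_forall_monomial_mem.not.mp hfJ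
  refine ⟨s, hsJ, Ideal.span_le.mpr ?_⟩
  rintro _ ⟨i, rfl⟩
  have hXf : X i * f ∈ J :=
    Ideal.mem_colon_span_singleton.mp (hf (Ideal.subset_span ⟨i, rfl⟩))
  have hsi : Finsupp.single i 1 + s ∈ (X i * f).support := by
    rw [support_X_mul]
    exact Finset.mem_map_of_mem _ hs
  simpa [Ideal.mem_colon_span_singleton, X, monomial_mul] using
    hJ.mem_iff_forall_monomial_mem.mp hXf _ hsi

theorem mul_alphaNumber_le_succ_of_colon_eq (hJ : IsMonomialIdeal J) {m k : ℕ}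
    {g : MvPolynomial σ K} (i : σ) (hprim : (J ^ m).radical = maxIdeal K σ)
    (hg : g.IsHomogeneous k) (hgJ : (J ^ m).colon (Ideal.span {g}) = maxIdeal K σ) :
    m * alphaNumber J ≤ k + 1 := by
  have hXg : X i * g ∈ J ^ m :=
    Ideal.mem_colon_span_singleton.mp (hgJ ▸ Ideal.subset_span ⟨i, rfl⟩)
  have hXg0 : X i * g ≠ 0 := mul_ne_zero (X_ne_zero i) (ne_zero_of_colon_eq_maxIdeal hprim hgJ)
  have := hJ.mul_alphaNumber_le_totalDegree hXg hXg0
  rwa [((isHomogeneous_X K i).mul hg).totalDegree hXg0, add_comm] at this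

theorem colon_pow_succ_mul_pow_eq_maxIdeal (hJ : IsMonomialIdeal J)
    (hprim : J.radical = maxIdeal K σ) {d : ℕ} {f : MvPolynomial σ K} (hf : f.IsHomogeneous d)
    (hfJ : J.colon (Ideal.span {f}) = maxIdeal K σ) (hd : d < alphaNumber J) {a : σ →₀ ℕ}
    (haJ : monomial a (1 : K) ∈ J) (ha : a.degree = alphaNumber J) (n : ℕ) :
    (J ^ (n + 1)).colon (Ideal.span {f * monomial a 1 ^ n}) = maxIdeal K σ := by
  have hprim' : (J ^ (n + 1)).radical = maxIdeal K σ := by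
    rw [Ideal.radical_pow J n.succ_ne_zero, hprim]
  refine (colon_eq_maxIdeal_iff hprim' _).mpr
    ⟨fun hF => ?_, hfJ ▸ Ideal.colon_span_singleton_le_colon_pow_succ haJ f n⟩
  have hF0 : f * monomial a 1 ^ n ≠ 0 :=
    mul_ne_zero (ne_zero_of_colon_eq_maxIdeal hprim hfJ)
      (pow_ne_zero _ (monomial_eq_zero.not.mpr one_ne_zero))
  have := hJ.mul_alphaNumber_le_totalDegree hF hF0
  rw [(hf.mul ((isHomogeneous_monomial (1 : K) ha).pow n)).totalDegree hF0] at this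
  nlinarith

variable [Finite σ]

theorem exists_monomial_colon_eq_maxIdeal (hJ : IsMonomialIdeal J)
    (hprim : J.radical = maxIdeal K σ) :
    ∃ s : σ →₀ ℕ, J.colon (Ideal.span {monomial s (1 : K)}) = maxIdeal K σ := by
  obtain ⟨f, hf⟩ := Ideal.exists_colon_span_singleton_eq_radical (hprim ▸ maxIdeal_isMaximal)
  rw [hprim, colon_eq_maxIdeal_iff hprim] at hf
  obtain ⟨s, hsJ, hs⟩ := hJ.exists_monomial_colon_le hf.1 hf.2
  exact ⟨s, (colon_eq_maxIdeal_iff hprim _).mpr ⟨hsJ, hs⟩⟩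

end IsMonomialIdeal

section VNumber

variable {σ K : Type*} [Field K] [Finite σ] {J : Ideal (MvPolynomial σ K)}

theorem vNumber_eq_sInf (hprim : J.radical = maxIdeal K σ) :
    vNumber J = sInf {k | ∃ f : MvPolynomial σ K, f.IsHomogeneous k ∧
      J.colon (Ideal.span {f}) = maxIdeal K σ} := by
  have hmax : J.radical.IsMaximal := hprim ▸ maxIdeal_isMaximal
  simp_rw [vNumber, Ideal.colon_span_singleton_mem_associatedPrimes_iff hmax, hprim]

theorem IsMonomialIdeal.exists_isHomogeneous_vNumber_colon_eq (hJ : IsMonomialIdeal J)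
    (hprim : J.radical = maxIdeal K σ) :
    ∃ f : MvPolynomial σ K, f.IsHomogeneous (vNumber J) ∧
      J.colon (Ideal.span {f}) = maxIdeal K σ := by
  obtain ⟨s, hs⟩ := hJ.exists_monomial_colon_eq_maxIdeal hprim
  rw [vNumber_eq_sInf hprim]
  exact Nat.sInf_mem (s := {k | ∃ f : MvPolynomial σ K, f.IsHomogeneous k ∧
    J.colon (Ideal.span {f}) = maxIdeal K σ}) ⟨_, _, isHomogeneous_monomial _ rfl, hs⟩

end VNumber

/-- if I is 𝔪-primary monomial with v(I) = α(I) - 1, then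
v(I^{n+1}) = v(I) + n·α(I) for all n ≥ 1. -/
theorem vNumber_pow_of_vNumber_eq_alpha_sub_one {K : Type*} [Field K] (t : ℕ)
    (I : Ideal (MvPolynomial (Fin t) K))
    (hmon : IsMonomialIdeal I) (hprim : I.radical = maxIdeal K (Fin t))
    (hv : vNumber I = alphaNumber I - 1) :
    ∀ n, 1 ≤ n → vNumber (I ^ (n + 1)) = vNumber I + n * alphaNumber I := by
  intro n _
  rcases eq_or_ne I ⊥ with rfl | hI0
  · simp -- `α(⊥) = 0` through the convention `sInf ∅ = 0`
  have hprim' : (I ^ (n + 1)).radical = maxIdeal K (Fin t) := by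
    rw [Ideal.radical_pow I n.succ_ne_zero, hprim]
  obtain ⟨a, haI, hadeg⟩ := hmon.exists_monomial_mem_degree_eq_alphaNumber hI0
  have ha0 : a ≠ 0 := by
    rintro rfl
    refine (maxIdeal_isMaximal (K := K) (σ := Fin t)).ne_top ?_
    rw [← hprim, Ideal.radical_eq_top, Ideal.eq_top_iff_one, one_def]
    exact haI
  obtain ⟨i, -⟩ := Finsupp.support_nonempty_iff.mpr ha0
  have hα : alphaNumber I ≠ 0 := hadeg ▸ (Finsupp.degree_eq_zero_iff a).not.mpr ha0
  obtain ⟨f, hf, hfI⟩ := hmon.exists_isHomogeneous_vNumber_colon_eq hprim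
  have hF := hf.mul ((isHomogeneous_monomial (1 : K) hadeg).pow n)
  rw [mul_comm (alphaNumber I)] at hF
  rw [vNumber_eq_sInf hprim']
  refine IsLeast.csInf_eq ⟨⟨_, hF, hmon.colon_pow_succ_mul_pow_eq_maxIdeal hprim hf hfI
    (by omega) haI hadeg n⟩, fun k ⟨g, hg, hgI⟩ => ?_⟩
  have := hmon.mul_alphaNumber_le_succ_of_colon_eq i hprim' hg hgI
  rw [Nat.succ_mul] at this
  omega
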